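/- Let H be a finite simple graph with vertex set V, let S ⊆ V, and let X ⊆ V be a 1/2-separator of S in H, i.e., every connected component C of the subgraph of H induced on V ∖ X satisfies |C ∩ S| ≤ |S|/2. For u,v ∈ V define d(u,v) = 1 if u ∈ X, or v ∈ X, or u and v lie in different connected components of the subgraph of H induced on V ∖ X, and d(u,v) = 0 otherwise. Then for every U ⊆ S and every u ∈ U, ∑_{v ∈ U} d(u,v) ≥ |U| − |S|/2. -/

import Mathlib

open Classical in
/-- `u` and `v` are connected in `H` by a walk all of whose vertices avoid `X`. -/
def ReachAvoiding {V : Type*} (H : SimpleGraph V) (X : Set V) (u v : V) : Prop :=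
  ∃ p : H.Walk u v, ∀ t ∈ p.support, t ∉ X

/-!
For `u ∉ X`, every `v ∈ U` with `d u v = 0` lies in the component of `u` off `X`, which
contains at most `|S| / 2` points of `S ⊇ U`; all other terms of the sum are `1`.
-/

open scoped Finset

namespace ReachAvoiding

variable {V : Type*} {H : SimpleGraph V} {X : Set V}

theorem symm {u v : V} (h : ReachAvoiding H X u v) : ReachAvoiding H X v u := by
  obtain ⟨p, hp⟩ := h
  exact ⟨p.reverse, fun t ht => hp t (by simpa using ht)⟩

open Classical in
theorem card_filter_le_ncard {S U : Finset V} (hUS : U ⊆ S) (u : V) :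
    #{v ∈ U | ReachAvoiding H X u v} ≤ ({w | ReachAvoiding H X w u} ∩ (↑S : Set V)).ncard := by
  rw [← Set.ncard_coe_finset]
  refine Set.ncard_le_ncard (fun v hv => ?_) (S.finite_toSet.inter_of_right _)
  rw [Finset.coe_filter] at hv
  exact ⟨hv.2.symm, hUS hv.1⟩

end ReachAvoiding

open Classical in
theorem separator_indicator_satisfies_spreading_general
    {V : Type*} [DecidableEq V] (H : SimpleGraph V) (S X : Finset V)
    (hsep : ∀ v : V, v ∉ X →
      ((({u | ReachAvoiding H (↑X) u v} ∩ (↑S : Set V)).ncard : ℝ)) ≤ (S.card : ℝ) / 2)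
    (d : V → V → ℝ)
    (hd : ∀ u v : V,
      d u v = if u ∈ X ∨ v ∈ X ∨ ¬ ReachAvoiding H (↑X) u v then 1 else 0) :
    ∀ U ⊆ S, ∀ u ∈ U, (U.card : ℝ) - (S.card : ℝ) / 2 ≤ ∑ v ∈ U, d u v := by
  intro U hUS u _
  by_cases huX : u ∈ X
  · have hd_one : ∑ v ∈ U, d u v = U.card := by simp [hd, huX]
    rw [hd_one]
    linarith [(S.card.cast_nonneg : (0 : ℝ) ≤ S.card)]
  have hd_ge : ∀ v, 1 - (if ReachAvoiding H X u v then 1 else 0) ≤ d u v := by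
    intro v
    rw [hd]
    split_ifs <;> simp_all
  calc (U.card : ℝ) - S.card / 2
      ≤ U.card - #{v ∈ U | ReachAvoiding H X u v} := by
        gcongr
        exact le_trans (by exact_mod_cast ReachAvoiding.card_filter_le_ncard hUS u) (hsep u huX)
    _ = ∑ v ∈ U, (1 - if ReachAvoiding H X u v then 1 else 0) := by
        rw [Finset.sum_sub_distrib, Finset.sum_boole]
        simp
    _ ≤ ∑ v ∈ U, d u v := Finset.sum_le_sum fun v _ => hd_ge v

open Classical in
/-- The indicator distances induced by a 1/2-separator satisfy the spreading constraints
(key claim in the proof of Lemma 3.1). -/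
theorem separator_indicator_satisfies_spreading
    {V : Type*} [Fintype V] [DecidableEq V] (H : SimpleGraph V) (S X : Finset V)
    (hsep : ∀ v : V, v ∉ X →
      ((({u | ReachAvoiding H (↑X) u v} ∩ (↑S : Set V)).ncard : ℝ)) ≤ (S.card : ℝ) / 2)
    (d : V → V → ℝ)
    (hd : ∀ u v : V,
      d u v = if u ∈ X ∨ v ∈ X ∨ ¬ ReachAvoiding H (↑X) u v then 1 else 0) :
    ∀ U ⊆ S, ∀ u ∈ U, (U.card : ℝ) - (S.card : ℝ) / 2 ≤ ∑ v ∈ U, d u v :=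
  separator_indicator_satisfies_spreading_general H S X hsep d hd
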